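/- arXiv:0808.1201 — 2 statements merged into one kernel-verified Lean document; each statement's English description precedes it below -/
import Mathlib

section
/- On the 5-dimensional nilpotent Lie algebra with structure equations de¹ = de² = de³ = 0, de⁴ = e¹∧e², de⁵ = e¹∧e⁴, the forms η = e¹, ω₁ = e²∧e⁴ + e⁵∧e³, ω₂ = e²∧e⁵ + e³∧e⁴, ω₃ = e²∧e³ + e⁴∧e⁵ satisfy the balanced SU(2) conditions d(ω₁∧η) = 0, d(ω₂∧η) = 0, d(ω₃∧ω₃) = 0. -/
/-- The generators `e¹, …, e⁵` (0-indexed) of the exterior algebra of the dual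
of a 5-dimensional Lie algebra. -/
noncomputable def E : Fin 5 → ExteriorAlgebra ℝ (Fin 5 → ℝ) :=
  fun i => ExteriorAlgebra.ι ℝ (Pi.single i 1)

lemma Esq (i : Fin 5) : E i * E i = 0 := ExteriorAlgebra.ι_sq_zero _

lemma Eswap (i j : Fin 5) : E j * E i = -(E i * E j) := by
  have h := ExteriorAlgebra.ι_sq_zero (R := ℝ)
    ((Pi.single i 1 + Pi.single j 1 : Fin 5 → ℝ))
  rw [map_add, add_mul, mul_add, mul_add] at h
  have hi := ExteriorAlgebra.ι_sq_zero (R := ℝ) (Pi.single i (1:ℝ) : Fin 5 → ℝ)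
  have hj := ExteriorAlgebra.ι_sq_zero (R := ℝ) (Pi.single j (1:ℝ) : Fin 5 → ℝ)
  simp only [E]
  rw [hi, hj] at h
  linear_combination (norm := noncomm_ring) h

lemma Esq' (i : Fin 5) (x : ExteriorAlgebra ℝ (Fin 5 → ℝ)) :
    E i * (E i * x) = 0 := by rw [← mul_assoc, Esq, zero_mul]

lemma Eswap' (i j : Fin 5) (x : ExteriorAlgebra ℝ (Fin 5 → ℝ)) :
    E j * (E i * x) = -(E i * (E j * x)) := by
  rw [← mul_assoc, Eswap, neg_mul, mul_assoc]

/-- On the 5-dimensional nilpotent Lie algebra `(0,0,0,12,14)`, with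
Chevalley–Eilenberg differential `d` (a linear map vanishing on constants,
satisfying the anti-derivation Leibniz rule and the structure equations
`de¹ = de² = de³ = 0`, `de⁴ = e¹∧e²`, `de⁵ = e¹∧e⁴`), the forms
`η = e¹`, `ω₁ = e²∧e⁴ + e⁵∧e³`, `ω₂ = e²∧e⁵ + e³∧e⁴`, `ω₃ = e²∧e³ + e⁴∧e⁵`
satisfy the balanced SU(2) conditions. -/
theorem balanced_su2_nilpotent_12_14
    (d : ExteriorAlgebra ℝ (Fin 5 → ℝ) →ₗ[ℝ] ExteriorAlgebra ℝ (Fin 5 → ℝ))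
    (hd1 : d 1 = 0)
    (hLeib : ∀ (v : Fin 5 → ℝ) (x : ExteriorAlgebra ℝ (Fin 5 → ℝ)),
      d (ExteriorAlgebra.ι ℝ v * x)
        = d (ExteriorAlgebra.ι ℝ v) * x - ExteriorAlgebra.ι ℝ v * d x)
    (h1 : d (E 0) = 0) (h2 : d (E 1) = 0) (h3 : d (E 2) = 0)
    (h4 : d (E 3) = E 0 * E 1) (h5 : d (E 4) = E 0 * E 3) :
    d ((E 1 * E 3 + E 4 * E 2) * E 0) = 0 ∧
    d ((E 1 * E 4 + E 2 * E 3) * E 0) = 0 ∧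
    d ((E 1 * E 2 + E 3 * E 4) * (E 1 * E 2 + E 3 * E 4)) = 0 := by
  have hL : ∀ (i : Fin 5) (x : ExteriorAlgebra ℝ (Fin 5 → ℝ)),
      d (E i * x) = d (E i) * x - E i * d x := fun i x => hLeib (Pi.single i 1) x
  refine ⟨?_, ?_, ?_⟩ <;>
  · simp only [add_mul, mul_add, mul_assoc, map_add, hL, h1, h2, h3, h4, h5,
      zero_mul, mul_zero, sub_zero, zero_sub, zero_add, add_zero,
      mul_neg, neg_mul, neg_neg, neg_zero, map_smul, map_neg, smul_zero,
      neg_smul, one_smul, smul_neg, smul_zero,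
      Esq, Esq',
      Eswap 0 1, Eswap 0 2, Eswap 0 3, Eswap 0 4, Eswap 1 2, Eswap 1 3,
      Eswap 1 4, Eswap 2 3, Eswap 2 4, Eswap 3 4,
      Eswap' 0 1, Eswap' 0 2, Eswap' 0 3, Eswap' 0 4, Eswap' 1 2, Eswap' 1 3,
      Eswap' 1 4, Eswap' 2 3, Eswap' 2 4, Eswap' 3 4]
    <;> abel
end

section
/- On the 5-dimensional solvable Lie algebra with de¹ = de² = 0, de³ = e¹∧e³, de⁴ = −e¹∧e⁴, de⁵ = e³∧e⁴, any invariant SU(2)-structure (η, ω₁, ω₂, ω₃) fails the hypo conditions: there is no quadruple with d(ω₁∧η) = d(ω₂∧η) = dω₃ = 0 and ω₁∧ω₁ = ω₂∧ω₂ = ω₃∧ω₃ a nonzero multiple of e²∧e³∧e⁴∧e⁵ (up to change of basis), ω₃∧ω₃∧η ≠ 0, and ωᵢ∧ωⱼ = 0 for i ≠ j. Concretely: if dω₃ = 0 and ω₃∧ω₃∧η ≠ 0 with d(ω₁∧η) = d(ω₂∧η) = 0, then ω₁∧ω₁ = 0, contradicting ω₁∧ω₁ = ω₃∧ω₃. 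-/
/-!
Write `η = Σ gᵢ eⁱ`, `ω₁ = Σ pᵢⱼ eⁱʲ` and `ω₃ = Σ qᵢⱼ eⁱʲ` (`i < j`, indices 0-based as in
`E`). Being closed, `ω₃` only involves `e⁰¹, e⁰², e⁰³, e²³`, so
`ω₃ ∧ ω₃ ∧ η = 2 q₀₁ q₂₃ g₄ e⁰¹²³⁴` and `q₀₁, q₂₃, g₄` are all nonzero. Reading
`ω₁ ∧ ω₃ = 0` off on the monomials containing `e⁴` shows that `ω₁` has no `e⁴`-part;
then the terms of `d(ω₁ ∧ η)` carrying `g₄` force `p₀₁ = p₁₂ = p₁₃ = 0`. Hence the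
Pfaffian `p₀₁p₂₃ − p₀₂p₁₃ + p₀₃p₁₂` vanishes and `ω₁ ∧ ω₁ = 0 ≠ ω₃ ∧ ω₃`.
-/

namespace NoInvariantHypo

open ExteriorAlgebra

local notation "Λ" => ExteriorAlgebra ℝ (Fin 5 → ℝ)
local notation "vol" => E 0 * (E 1 * (E 2 * (E 3 * E 4)))

lemma E_mul_self (i : Fin 5) : E i * E i = 0 := ι_sq_zero _

lemma E_mul_E_mul_self (i : Fin 5) (x : Λ) : E i * (E i * x) = 0 := by
  rw [← mul_assoc, E_mul_self, zero_mul]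

lemma E_mul_E_of_lt {i j : Fin 5} (_ : j < i) : E i * E j = -(E j * E i) :=
  eq_neg_of_add_eq_zero_left (ι_add_mul_swap _ _)

lemma E_mul_E_mul_of_lt {i j : Fin 5} (h : j < i) (x : Λ) :
    E i * (E j * x) = -(E j * (E i * x)) := by
  rw [← mul_assoc, E_mul_E_of_lt h, neg_mul, mul_assoc]

/-- A coefficient of a form is read off by wedging with the complementary monomial and
applying `volCoeff`. -/
noncomputable def volCoeff : Λ →ₗ[ℝ] ℝ :=
  liftAlternating (Pi.single 5 Matrix.detRowAlternating)

lemma volCoeff_vol : volCoeff vol = 1 := by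
  have hvol : vol = ιMulti ℝ 5 (fun i => Pi.single i 1) := by
    simp [ιMulti_apply, E, Matrix.vecTail]
  have hone : (fun i => Pi.single i 1 : Fin 5 → Fin 5 → ℝ) = (1 : Matrix (Fin 5) (Fin 5) ℝ) := by
    ext i j
    exact Matrix.one_eq_pi_single.symm
  rw [hvol, volCoeff, liftAlternating_apply_ιMulti, Pi.single_eq_same, hone]
  change Matrix.det (1 : Matrix (Fin 5) (Fin 5) ℝ) = 1
  exact Matrix.det_one

noncomputable def oneForm (g : Fin 5 → ℝ) : Λ := ∑ i, g i • E i

noncomputable def twoForm (p : Fin 5 → Fin 5 → ℝ) : Λ :=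
  p 0 1 • (E 0 * E 1) + p 0 2 • (E 0 * E 2) + p 0 3 • (E 0 * E 3) + p 0 4 • (E 0 * E 4)
    + p 1 2 • (E 1 * E 2) + p 1 3 • (E 1 * E 3) + p 1 4 • (E 1 * E 4)
    + p 2 3 • (E 2 * E 3) + p 2 4 • (E 2 * E 4) + p 3 4 • (E 3 * E 4)

lemma exists_oneForm_eq {η : Λ} (h : η ∈ Submodule.span ℝ (Set.range E)) :
    ∃ g, η = oneForm g := by
  obtain ⟨g, hg⟩ := (Submodule.mem_span_range_iff_exists_fun ℝ).mp h
  exact ⟨g, hg.symm⟩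

lemma exists_twoForm_eq {ω : Λ} (h : ω ∈ Submodule.span ℝ {x | ∃ i j, x = E i * E j}) :
    ∃ p, ω = twoForm p := by
  have hset : {x : Λ | ∃ i j, x = E i * E j}
      = Set.range (fun ij : Fin 5 × Fin 5 => E ij.1 * E ij.2) := by
    ext x
    simp [eq_comm]
  rw [hset] at h
  obtain ⟨c, rfl⟩ := (Submodule.mem_span_range_iff_exists_fun ℝ).mp h
  refine ⟨fun i j => c (i, j) - c (j, i), ?_⟩
  simp only [Fintype.sum_prod_type, Fin.sum_univ_five, twoForm, E_mul_self, smul_zero,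
    E_mul_E_of_lt, Fin.reduceLT, smul_neg]
  module

lemma twoForm_mul_self {p : Fin 5 → Fin 5 → ℝ} (h04 : p 0 4 = 0) (h14 : p 1 4 = 0)
    (h24 : p 2 4 = 0) (h34 : p 3 4 = 0) :
    twoForm p * twoForm p
      = (2 * (p 0 1 * p 2 3 - p 0 2 * p 1 3 + p 0 3 * p 1 2)) • (E 0 * (E 1 * (E 2 * E 3))) := by
  simp only [twoForm, h04, h14, h24, h34, zero_smul, add_mul, mul_add, smul_mul_assoc,
    mul_smul_comm, mul_assoc, E_mul_self, E_mul_E_mul_self, E_mul_E_of_lt, E_mul_E_mul_of_lt,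
    Fin.reduceLT, mul_neg, neg_neg, mul_zero, smul_zero, smul_neg, neg_zero, add_zero, zero_add]
  module

lemma E0123_mul_oneForm (g : Fin 5 → ℝ) :
    E 0 * (E 1 * (E 2 * E 3)) * oneForm g = g 4 • vol := by
  simp only [oneForm, Fin.sum_univ_five, mul_add, mul_smul_comm, mul_assoc, E_mul_self,
    E_mul_E_mul_self, E_mul_E_of_lt, E_mul_E_mul_of_lt, Fin.reduceLT, mul_neg, neg_neg, mul_zero,
    smul_zero, neg_zero, add_zero, zero_add]

lemma coeff_four_eq_zero_of_twoForm_mul_eq_zero {p q : Fin 5 → Fin 5 → ℝ} (hq04 : q 0 4 = 0)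
    (hq12 : q 1 2 = 0) (hq13 : q 1 3 = 0) (hq14 : q 1 4 = 0) (hq24 : q 2 4 = 0)
    (hq34 : q 3 4 = 0) (hq01 : q 0 1 ≠ 0) (hq23 : q 2 3 ≠ 0) (h : twoForm p * twoForm q = 0) :
    p 0 4 = 0 ∧ p 1 4 = 0 ∧ p 2 4 = 0 ∧ p 3 4 = 0 := by
  simp only [twoForm, hq04, hq12, hq13, hq14, hq24, hq34, zero_smul, add_zero, add_mul, mul_add,
    smul_mul_assoc, mul_smul_comm, mul_assoc, E_mul_self, E_mul_E_mul_self, E_mul_E_of_lt,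
    E_mul_E_mul_of_lt, Fin.reduceLT, mul_neg, neg_neg, mul_zero, smul_zero, neg_zero,
    zero_add] at h
  have c1234 := congrArg (fun x => volCoeff (E 0 * x)) h
  have c0234 := congrArg (fun x => volCoeff (E 1 * x)) h
  have c0134 := congrArg (fun x => volCoeff (E 2 * x)) h
  have c0124 := congrArg (fun x => volCoeff (E 3 * x)) h
  simp only [mul_add, mul_smul_comm, E_mul_self, E_mul_E_mul_self, E_mul_E_mul_of_lt,
    Fin.reduceLT, mul_neg, neg_neg, mul_zero, smul_zero, smul_neg, neg_zero, add_zero, zero_add,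
    map_neg, map_smul, map_add, map_zero, volCoeff_vol, smul_eq_mul, mul_one]
    at c1234 c0234 c0134 c0124
  have h14 : p 1 4 = 0 := (mul_eq_zero_iff_left hq23).1 c1234
  have h24 : p 2 4 = 0 :=
    (mul_eq_zero_iff_left hq01).1 (by linear_combination -c0124 + q 0 2 * h14)
  have h34 : p 3 4 = 0 :=
    (mul_eq_zero_iff_left hq01).1 (by linear_combination c0134 + q 0 3 * h14)
  have h04 : p 0 4 = 0 :=
    (mul_eq_zero_iff_left hq23).1 (by linear_combination -c0234 - q 0 2 * h34 + q 0 3 * h24)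
  exact ⟨h04, h14, h24, h34⟩

structure IsCEDifferential (d : Λ →ₗ[ℝ] Λ) : Prop where
  leibniz : ∀ v x, d (ι ℝ v * x) = d (ι ℝ v) * x - ι ℝ v * d x
  d_E0 : d (E 0) = 0
  d_E1 : d (E 1) = 0
  d_E2 : d (E 2) = E 0 * E 2
  d_E3 : d (E 3) = -(E 0 * E 3)
  d_E4 : d (E 4) = E 2 * E 3

namespace IsCEDifferential

variable {d : Λ →ₗ[ℝ] Λ}

lemma d_E_mul (hd : IsCEDifferential d) (i : Fin 5) (x : Λ) :
    d (E i * x) = d (E i) * x - E i * d x :=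
  hd.leibniz _ x

lemma d_twoForm (hd : IsCEDifferential d) (p : Fin 5 → Fin 5 → ℝ) :
    d (twoForm p)
      = p 1 2 • (E 0 * (E 1 * E 2)) - p 1 3 • (E 0 * (E 1 * E 3)) - p 0 4 • (E 0 * (E 2 * E 3))
        + p 2 4 • (E 0 * (E 2 * E 4)) - p 3 4 • (E 0 * (E 3 * E 4))
        - p 1 4 • (E 1 * (E 2 * E 3)) := by
  simp only [twoForm, map_add, map_smul, hd.d_E_mul, hd.d_E0, hd.d_E1, hd.d_E2, hd.d_E3, hd.d_E4,
    mul_assoc, E_mul_self, E_mul_E_mul_self, E_mul_E_mul_of_lt, Fin.reduceLT, mul_neg, neg_mul,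
    neg_neg, mul_zero, zero_mul, neg_zero]
  module

lemma coeff_eq_zero_of_d_twoForm_eq_zero (hd : IsCEDifferential d) {p : Fin 5 → Fin 5 → ℝ}
    (h : d (twoForm p) = 0) :
    p 0 4 = 0 ∧ p 1 2 = 0 ∧ p 1 3 = 0 ∧ p 1 4 = 0 ∧ p 2 4 = 0 ∧ p 3 4 = 0 := by
  rw [hd.d_twoForm] at h
  have c04 := congrArg (fun x => volCoeff (x * (E 1 * E 4))) h
  have c12 := congrArg (fun x => volCoeff (x * (E 3 * E 4))) h
  have c13 := congrArg (fun x => volCoeff (x * (E 2 * E 4))) h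
  have c14 := congrArg (fun x => volCoeff (x * (E 0 * E 4))) h
  have c24 := congrArg (fun x => volCoeff (x * (E 1 * E 3))) h
  have c34 := congrArg (fun x => volCoeff (x * (E 1 * E 2))) h
  simp only [add_mul, sub_mul, smul_mul_assoc, mul_assoc, E_mul_self, E_mul_E_mul_self,
    E_mul_E_of_lt, E_mul_E_mul_of_lt, Fin.reduceLT, mul_neg, neg_neg, mul_zero, zero_mul, smul_zero,
    smul_neg, neg_zero, add_zero, zero_add, sub_zero, zero_sub, map_neg, map_smul, volCoeff_vol,
    smul_eq_mul, mul_one, neg_eq_zero, map_zero] at c04 c12 c13 c14 c24 c34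
  exact ⟨c04, c12, c13, c14, c24, c34⟩

lemma coeff_eq_zero_of_d_twoForm_mul_oneForm_eq_zero (hd : IsCEDifferential d)
    {p : Fin 5 → Fin 5 → ℝ} {g : Fin 5 → ℝ} (h04 : p 0 4 = 0) (h14 : p 1 4 = 0)
    (h24 : p 2 4 = 0) (h34 : p 3 4 = 0) (hg : g 4 ≠ 0) (h : d (twoForm p * oneForm g) = 0) :
    p 0 1 = 0 ∧ p 1 2 = 0 ∧ p 1 3 = 0 := by
  simp only [twoForm, oneForm, Fin.sum_univ_five, h04, h14, h24, h34, zero_smul, add_zero,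
    add_mul, mul_add, smul_mul_assoc, mul_smul_comm, mul_assoc, E_mul_self, E_mul_E_mul_self,
    E_mul_E_of_lt, E_mul_E_mul_of_lt, Fin.reduceLT, mul_neg, neg_neg, mul_zero, zero_mul,
    smul_zero, smul_neg, neg_zero, zero_add, map_add, map_neg, map_smul, hd.d_E_mul, hd.d_E0,
    hd.d_E1, hd.d_E2, hd.d_E3, hd.d_E4, mul_sub, neg_mul, sub_zero, zero_sub] at h
  have c0123 := congrArg (fun x => volCoeff (x * E 4)) h
  have c0124 := congrArg (fun x => volCoeff (x * E 3)) h
  have c0134 := congrArg (fun x => volCoeff (x * E 2)) h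
  simp only [add_mul, sub_mul, smul_mul_assoc, mul_assoc, E_mul_self, E_mul_E_mul_self,
    E_mul_E_of_lt, E_mul_E_mul_of_lt, Fin.reduceLT, mul_neg, neg_mul, neg_neg, mul_zero,
    zero_mul, smul_zero, smul_neg, neg_zero, add_zero, zero_add, sub_zero, map_neg, map_smul,
    volCoeff_vol, smul_eq_mul, mul_one, map_add, map_sub, map_zero] at c0123 c0124 c0134
  have h01 : g 4 * p 0 1 = 0 := by linear_combination c0123
  have h12 : g 4 * p 1 2 = 0 := by linear_combination -c0124
  have h13 : g 4 * p 1 3 = 0 := by linear_combination -c0134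
  exact ⟨(mul_eq_zero_iff_left hg).1 h01, (mul_eq_zero_iff_left hg).1 h12,
    (mul_eq_zero_iff_left hg).1 h13⟩

end IsCEDifferential

end NoInvariantHypo

open NoInvariantHypo

theorem no_invariant_hypo_solvable_general
    (d : ExteriorAlgebra ℝ (Fin 5 → ℝ) →ₗ[ℝ] ExteriorAlgebra ℝ (Fin 5 → ℝ))
    (hLeib : ∀ (v : Fin 5 → ℝ) (x : ExteriorAlgebra ℝ (Fin 5 → ℝ)),
      d (ExteriorAlgebra.ι ℝ v * x)
        = d (ExteriorAlgebra.ι ℝ v) * x - ExteriorAlgebra.ι ℝ v * d x)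
    (h1 : d (E 0) = 0) (h2 : d (E 1) = 0)
    (h3 : d (E 2) = E 0 * E 2) (h4 : d (E 3) = -(E 0 * E 3))
    (h5 : d (E 4) = E 2 * E 3) :
    ¬ ∃ η ω₁ ω₂ ω₃ : ExteriorAlgebra ℝ (Fin 5 → ℝ),
      η ∈ Submodule.span ℝ (Set.range E) ∧
      ω₁ ∈ Submodule.span ℝ {x | ∃ i j, x = E i * E j} ∧
      ω₂ ∈ Submodule.span ℝ {x | ∃ i j, x = E i * E j} ∧
      ω₃ ∈ Submodule.span ℝ {x | ∃ i j, x = E i * E j} ∧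
      ω₁ * ω₁ = ω₃ * ω₃ ∧ ω₂ * ω₂ = ω₃ * ω₃ ∧
      ω₁ * ω₂ = 0 ∧ ω₁ * ω₃ = 0 ∧ ω₂ * ω₃ = 0 ∧
      ω₃ * ω₃ * η ≠ 0 ∧
      d (ω₁ * η) = 0 ∧ d (ω₂ * η) = 0 ∧ d ω₃ = 0 := by
  have hd : IsCEDifferential d := ⟨hLeib, h1, h2, h3, h4, h5⟩
  rintro ⟨η, ω₁, -, ω₃, hη, hω₁, -, hω₃, h11, -, -, h13, -, hvol, hdη, -, hd3⟩
  obtain ⟨g, rfl⟩ := exists_oneForm_eq hη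
  obtain ⟨p, rfl⟩ := exists_twoForm_eq hω₁
  obtain ⟨q, rfl⟩ := exists_twoForm_eq hω₃
  obtain ⟨hq04, hq12, hq13, hq14, hq24, hq34⟩ := hd.coeff_eq_zero_of_d_twoForm_eq_zero hd3
  have hqg := hvol
  rw [twoForm_mul_self hq04 hq14 hq24 hq34, hq12, hq13, smul_mul_assoc, E0123_mul_oneForm,
    smul_smul] at hqg
  simp only [mul_zero, sub_zero, add_zero, ne_eq, smul_eq_zero, mul_eq_zero, not_or] at hqg
  obtain ⟨⟨⟨-, hq01, hq23⟩, hg4⟩, -⟩ := hqg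
  obtain ⟨hp04, hp14, hp24, hp34⟩ :=
    coeff_four_eq_zero_of_twoForm_mul_eq_zero hq04 hq12 hq13 hq14 hq24 hq34 hq01 hq23 h13
  obtain ⟨hp01, hp12, hp13⟩ :=
    hd.coeff_eq_zero_of_d_twoForm_mul_oneForm_eq_zero hp04 hp14 hp24 hp34 hg4 hdη
  have hp : twoForm p * twoForm p = 0 := by
    rw [twoForm_mul_self hp04 hp14 hp24 hp34, hp01, hp12, hp13]
    simp
  exact hvol (by rw [← h11, hp, zero_mul])

/-- On the 5-dimensional solvable Lie algebra with `de¹ = de² = 0`,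
`de³ = e¹∧e³`, `de⁴ = −e¹∧e⁴`, `de⁵ = e³∧e⁴`, there is no invariant hypo
SU(2)-structure: no 1-form `η` and invariant 2-forms `ω₁, ω₂, ω₃` satisfy
`ω₁∧ω₁ = ω₂∧ω₂ = ω₃∧ω₃`, `ωᵢ∧ωⱼ = 0` for `i ≠ j`, `ω₃∧ω₃∧η ≠ 0` together
with the hypo conditions `d(ω₁∧η) = d(ω₂∧η) = dω₃ = 0`. -/
theorem no_invariant_hypo_solvable
    (d : ExteriorAlgebra ℝ (Fin 5 → ℝ) →ₗ[ℝ] ExteriorAlgebra ℝ (Fin 5 → ℝ))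
    (hd1 : d 1 = 0)
    (hLeib : ∀ (v : Fin 5 → ℝ) (x : ExteriorAlgebra ℝ (Fin 5 → ℝ)),
      d (ExteriorAlgebra.ι ℝ v * x)
        = d (ExteriorAlgebra.ι ℝ v) * x - ExteriorAlgebra.ι ℝ v * d x)
    (h1 : d (E 0) = 0) (h2 : d (E 1) = 0)
    (h3 : d (E 2) = E 0 * E 2) (h4 : d (E 3) = -(E 0 * E 3))
    (h5 : d (E 4) = E 2 * E 3) :
    ¬ ∃ η ω₁ ω₂ ω₃ : ExteriorAlgebra ℝ (Fin 5 → ℝ),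
      η ∈ Submodule.span ℝ (Set.range E) ∧
      ω₁ ∈ Submodule.span ℝ {x | ∃ i j, x = E i * E j} ∧
      ω₂ ∈ Submodule.span ℝ {x | ∃ i j, x = E i * E j} ∧
      ω₃ ∈ Submodule.span ℝ {x | ∃ i j, x = E i * E j} ∧
      ω₁ * ω₁ = ω₃ * ω₃ ∧ ω₂ * ω₂ = ω₃ * ω₃ ∧
      ω₁ * ω₂ = 0 ∧ ω₁ * ω₃ = 0 ∧ ω₂ * ω₃ = 0 ∧
      ω₃ * ω₃ * η ≠ 0 ∧
      d (ω₁ * η) = 0 ∧ d (ω₂ * η) = 0 ∧ d ω₃ = 0 :=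
  no_invariant_hypo_solvable_general d hLeib h1 h2 h3 h4 h5
end
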